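/- Let F be a field of characteristic zero and let b, c, t ∈ F with (b, c) ≠ (0, 0). Then the three equations b² + bc + bct + c² = b²t + bct² + bc + c²t, b² + 2bct + c²t² = b²t + 2bc + c², and b²t² + 2bct + c² = b² + 2bc + c²t hold simultaneously if and only if t = 1, or (b = c and t = −2), or (b = −c and t = 2). -/
import Mathlib


/-- F1-invariance conditions: the three closure equations hold simultaneously
iff `t = 1`, or `b = c` and `t = -2`, or `b = -c` and `t = 2`. -/
theorem stmt1 {F : Type*} [Field F] [CharZero F] (b c t : F)
    (h : (b, c) ≠ (0, 0)) :
    (b ^ 2 + b * c + b * c * t + c ^ 2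
        = b ^ 2 * t + b * c * t ^ 2 + b * c + c ^ 2 * t ∧
     b ^ 2 + 2 * b * c * t + c ^ 2 * t ^ 2
        = b ^ 2 * t + 2 * b * c + c ^ 2 ∧
     b ^ 2 * t ^ 2 + 2 * b * c * t + c ^ 2
        = b ^ 2 + 2 * b * c + c ^ 2 * t) ↔
    (t = 1 ∨ (b = c ∧ t = -2) ∨ (b = -c ∧ t = 2)) := by
  constructor
  · rintro ⟨h1, h2, h3⟩
    by_cases ht : t = 1
    · exact Or.inl ht
    have ht1 : (1 : F) - t ≠ 0 := sub_ne_zero.mpr (fun hh => ht hh.symm)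
    have e1 : b ^ 2 + b * c * t + c ^ 2 = 0 := by
      have : (1 - t) * (b ^ 2 + b * c * t + c ^ 2) = 0 := by linear_combination h1
      rcases mul_eq_zero.mp this with h' | h'
      · exact absurd h' ht1
      · exact h'
    have e2 : b ^ 2 - 2 * b * c - c ^ 2 * (t + 1) = 0 := by
      have : (1 - t) * (b ^ 2 - 2 * b * c - c ^ 2 * (t + 1)) = 0 := by
        linear_combination h2
      rcases mul_eq_zero.mp this with h' | h'
      · exact absurd h' ht1
      · exact h'
    have e3 : b ^ 2 * (t + 1) + 2 * b * c - c ^ 2 = 0 := by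
      have : (1 - t) * (b ^ 2 * (t + 1) + 2 * b * c - c ^ 2) = 0 := by
        linear_combination -h3
      rcases mul_eq_zero.mp this with h' | h'
      · exact absurd h' ht1
      · exact h'
    have s : t * (b ^ 2 + c ^ 2) + 4 * (b * c) = 0 := by linear_combination e3 - e2
    have key : b * c * (t ^ 2 - 4) = 0 := by linear_combination t * e1 - s
    rcases mul_eq_zero.mp key with hbc | ht4
    · rcases mul_eq_zero.mp hbc with hb | hc
      · have hc : c = 0 := by
          have : c ^ 2 = 0 := by linear_combination e1 - (b + c * t) * hb
          exact (pow_eq_zero_iff two_ne_zero).mp this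
        exact absurd (by rw [hb, hc]) h
      · have hb : b = 0 := by
          have : b ^ 2 = 0 := by linear_combination e1 - (c + b * t) * hc
          exact (pow_eq_zero_iff two_ne_zero).mp this
        exact absurd (by rw [hb, hc]) h
    · have : (t - 2) * (t + 2) = 0 := by linear_combination ht4
      rcases mul_eq_zero.mp this with h2' | h2'
      · have ht2 : t = 2 := by linear_combination h2'
        have : (b + c) ^ 2 = 0 := by
          rw [ht2] at e1; linear_combination e1
        have hbc : b + c = 0 := (pow_eq_zero_iff two_ne_zero).mp this
        exact Or.inr (Or.inr ⟨by linear_combination hbc, ht2⟩)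
      · have ht2 : t = -2 := by linear_combination h2'
        have : (b - c) ^ 2 = 0 := by
          rw [ht2] at e1; linear_combination e1
        have hbc : b - c = 0 := (pow_eq_zero_iff two_ne_zero).mp this
        exact Or.inr (Or.inl ⟨by linear_combination hbc, ht2⟩)
  · rintro (ht | ⟨hb, ht⟩ | ⟨hb, ht⟩) <;> subst_vars <;> refine ⟨by ring, by ring, by ring⟩
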